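/- arXiv:2605.11309 — 4 statements merged into one kernel-verified Lean document; each statement's English description precedes it below -/
import Mathlib

section
/- Suppose the directed graph G = (V,E) satisfies the 1-reach condition with parameter ρ = f+1 (i.e., for every F ⊆ V with |F| ≤ f and all u, v ∈ V−F, |reach_u(F) ∩ reach_v(F)| ≥ f+1). Then G satisfies Condition S: for every F ⊆ V with |F| ≤ f, the induced subgraph G_F has a unique source component, and that source component contains at least f+1 vertices. -/
/-- Edge relation of the induced subgraph `G_F` (both endpoints avoid `F`). -/
def stepRel {V : Type*} (E : V → V → Prop) (F : Set V) (a b : V) : Prop :=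
  a ∉ F ∧ b ∉ F ∧ E a b

/-- `reachSet E F u`: vertices `w ∉ F` having a directed path (possibly trivial)
to `u` that uses only vertices outside `F`. -/
def reachSet {V : Type*} (E : V → V → Prop) (F : Set V) (u : V) : Set V :=
  {w | w ∉ F ∧ Relation.ReflTransGen (stepRel E F) w u}

/-- `S` is a source component of the induced subgraph `G_F`: it is a strongly
connected component of `G_F` (an equivalence class of mutual reachability,
i.e. a maximal mutually-connected set), with no incoming edges of `G_F` from
vertices outside `S`. -/
def IsSourceComponent {V : Type*} (E : V → V → Prop) (F : Set V) (S : Set V) : Prop :=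
  (∃ v ∉ F, S = {w | Relation.ReflTransGen (stepRel E F) v w ∧
                     Relation.ReflTransGen (stepRel E F) w v}) ∧
  ∀ a ∉ S, ∀ b ∈ S, ¬ stepRel E F a b

/-- Condition S: for every `F` with `|F| ≤ f`, the graph `G_F` has a unique
source component, and that source component has at least `f+1` vertices. -/
def ConditionS {V : Type*} (E : V → V → Prop) (f : ℕ) : Prop :=
  ∀ F : Set V, F.ncard ≤ f →
    ∃ S : Set V, IsSourceComponent E F S ∧ f + 1 ≤ S.ncard ∧
      ∀ S' : Set V, IsSourceComponent E F S' → S' = S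

/-!
Pick `v ∉ F` whose reach set is as small as possible. Every `w` reaching `v` has
`reach_w(F) ⊆ reach_v(F)`, hence equality by minimality, so `v` reaches `w` back:
`reach_v(F)` lies inside the strongly connected component of `v`, which therefore has no
incoming edges and has at least `|reach_v(F) ∩ reach_v(F)| ≥ f + 1` vertices.
A source component is closed under predecessors, and for any other source component,
generated by `v'`, the 1-reach condition gives a vertex reaching both `v` and `v'`;
it lies in both components, so they coincide.
-/

def scc {V : Type*} (E : V → V → Prop) (F : Set V) (v : V) : Set V :=
  {w | Relation.ReflTransGen (stepRel E F) v w ∧ Relation.ReflTransGen (stepRel E F) w v}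

section

variable {V : Type*} {E : V → V → Prop} {F S : Set V} {v w b : V}

lemma mem_scc_self : v ∈ scc E F v := ⟨.refl, .refl⟩

lemma scc_eq_of_mem (hw : w ∈ scc E F v) : scc E F w = scc E F v := by
  ext x
  exact ⟨fun ⟨hwx, hxw⟩ => ⟨hw.1.trans hwx, hxw.trans hw.2⟩,
    fun ⟨hvx, hxv⟩ => ⟨hw.2.trans hvx, hxv.trans hw.1⟩⟩

lemma reachSet_subset_of_mem (hw : w ∈ reachSet E F v) : reachSet E F w ⊆ reachSet E F v :=
  fun _ ⟨hxF, hxw⟩ => ⟨hxF, hxw.trans hw.2⟩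

lemma mem_of_reflTransGen_of_noIncoming (hS : ∀ a ∉ S, ∀ b ∈ S, ¬ stepRel E F a b)
    (h : Relation.ReflTransGen (stepRel E F) w b) (hb : b ∈ S) : w ∈ S := by
  induction h using Relation.ReflTransGen.head_induction_on with
  | refl => exact hb
  | head hstep _ ih => exact by_contra fun hw => hS _ hw _ ih hstep

lemma IsSourceComponent.eq_scc_of_reflTransGen (hS : IsSourceComponent E F S) (hb : b ∈ S)
    (hwb : Relation.ReflTransGen (stepRel E F) w b) : S = scc E F w := by
  obtain ⟨⟨v, -, rfl⟩, hS⟩ := hS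
  exact (scc_eq_of_mem (mem_of_reflTransGen_of_noIncoming hS hwb hb)).symm

lemma reachSet_subset_scc_of_minimal [Finite V] (hv : v ∉ F)
    (hmin : ∀ w ∉ F, (reachSet E F v).ncard ≤ (reachSet E F w).ncard) :
    reachSet E F v ⊆ scc E F v := by
  intro w hw
  have hreach : reachSet E F w = reachSet E F v :=
    Set.eq_of_subset_of_ncard_le (reachSet_subset_of_mem hw) (hmin w hw.1) (Set.toFinite _)
  have hvw : v ∈ reachSet E F w := hreach ▸ ⟨hv, .refl⟩
  exact ⟨hvw.2, hw.2⟩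

lemma isSourceComponent_scc_of_reachSet_subset (hv : v ∉ F)
    (h : reachSet E F v ⊆ scc E F v) : IsSourceComponent E F (scc E F v) :=
  ⟨⟨v, hv, rfl⟩, fun _ ha _ hb hab => ha (h ⟨hab.1, .head hab hb.2⟩)⟩

end

theorem one_reach_fplus1_implies_conditionS_general {V : Type*} [Fintype V]
    (E : V → V → Prop) (f : ℕ) (hfn : f < Fintype.card V)
    (h1 : ∀ F : Set V, F.ncard ≤ f → ∀ u ∉ F, ∀ v ∉ F,
      f + 1 ≤ (reachSet E F u ∩ reachSet E F v).ncard) :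
    ConditionS E f := by
  intro F hF
  have hFc : Fᶜ.Nonempty := Set.nonempty_compl.2 fun hF_univ => by
    rw [hF_univ, Set.ncard_univ, Nat.card_eq_fintype_card] at hF
    omega
  obtain ⟨v, hvF, hvmin⟩ := Set.exists_min_image Fᶜ (fun x => (reachSet E F x).ncard)
    (Set.toFinite _) hFc
  have hsub := reachSet_subset_scc_of_minimal hvF hvmin
  have hS := isSourceComponent_scc_of_reachSet_subset hvF hsub
  refine ⟨scc E F v, hS, ?_, fun S' hS' => ?_⟩
  · have hreach := h1 F hF v hvF v hvF
    rw [Set.inter_self] at hreach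
    exact hreach.trans (Set.ncard_le_ncard hsub (Set.toFinite _))
  · obtain ⟨v', hv'F, rfl⟩ := hS'.1
    obtain ⟨w, hwv, hwv'⟩ : (reachSet E F v ∩ reachSet E F v').Nonempty :=
      Set.nonempty_of_ncard_ne_zero (by have := h1 F hF v hvF v' hv'F; omega)
    rw [hS'.eq_scc_of_reflTransGen mem_scc_self hwv'.2,
      hS.eq_scc_of_reflTransGen mem_scc_self hwv.2]

theorem one_reach_fplus1_implies_conditionS {V : Type*} [Fintype V]
    (E : V → V → Prop) (f : ℕ) (hf : 0 < f) (hfn : f < Fintype.card V)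
    (h1 : ∀ F : Set V, F.ncard ≤ f → ∀ u ∉ F, ∀ v ∉ F,
      f + 1 ≤ (reachSet E F u ∩ reachSet E F v).ncard) :
    ConditionS E f :=
  one_reach_fplus1_implies_conditionS_general E f hfn h1
end

section
/- Suppose the directed graph G = (V,E) satisfies the 2-reach condition with parameter ρ = f+1 (i.e., for every F1, F2 ⊆ V with |F1| ≤ f and |F2| ≤ f, and every u ∈ V−F1 and v ∈ V−F2, |reach_u(F1) ∩ reach_v(F2)| ≥ f+1). Then G satisfies Condition A: for every F ⊆ V with |F| ≤ f, the induced subgraph G_F has a unique source component S_F with |S_F| ≥ 2f+1, and for every F, F' ⊆ V with |F| ≤ f and |F'| ≤ f, |S_F ∩ S_{F'}| ≥ f+1. -/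
/-- Condition A: for every `F` with `|F| ≤ f`, the graph `G_F` has a unique
source component `S_F` with `|S_F| ≥ 2f+1`, and the source components
corresponding to any two such sets `F`, `F'` intersect in at least `f+1`
vertices. -/
def ConditionA {V : Type*} (E : V → V → Prop) (f : ℕ) : Prop :=
  (∀ F : Set V, F.ncard ≤ f →
    ∃ S : Set V, IsSourceComponent E F S ∧ 2 * f + 1 ≤ S.ncard ∧
      ∀ S' : Set V, IsSourceComponent E F S' → S' = S) ∧
  (∀ F F' : Set V, F.ncard ≤ f → F'.ncard ≤ f →
    ∀ S S' : Set V, IsSourceComponent E F S → IsSourceComponent E F' S' →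
      f + 1 ≤ (S ∩ S').ncard)

/-!
A source component of `G_F` is closed under predecessors, so it equals `reach_v(F)` for each
of its vertices `v`. Hence two source components meet in at least `f + 1` vertices by the
2-reach condition (in particular those of one `G_F` coincide), and a source component `S`
with `|S| ≤ 2f` fails it for `F₁ = F`, `u = v ∈ S` and `F₂ ⊆ S - {v}` of size
`min f (|S| - 1)`, since then `reach_v(F) ∩ reach_v(F₂) ⊆ S - F₂`.
-/

open Relation

section

variable {V : Type*} {E : V → V → Prop} {F S : Set V}

lemma notMem_of_reflTransGen_stepRel {w u : V} (h : ReflTransGen (stepRel E F) w u)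
    (hu : u ∉ F) : w ∉ F := by
  induction h using ReflTransGen.head_induction_on with
  | refl => exact hu
  | head hstep _ _ => exact hstep.1

namespace IsSourceComponent

lemma exists_mem (hS : IsSourceComponent E F S) : ∃ v ∉ F, v ∈ S := by
  obtain ⟨⟨v, hv, rfl⟩, -⟩ := hS
  exact ⟨v, hv, .refl, .refl⟩

lemma mem_of_reflTransGen (hS : IsSourceComponent E F S) {v w : V} (hv : v ∈ S)
    (h : ReflTransGen (stepRel E F) w v) : w ∈ S := by
  induction h using ReflTransGen.head_induction_on with
  | refl => exact hv
  | head hstep _ ih => exact by_contra fun hw => hS.2 _ hw _ ih hstep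

lemma eq_reachSet (hS : IsSourceComponent E F S) {v : V} (hv : v ∈ S) :
    S = reachSet E F v := by
  ext w
  refine ⟨fun hw => ?_, fun hw => hS.mem_of_reflTransGen hv hw.2⟩
  obtain ⟨⟨v₀, hv₀, rfl⟩, -⟩ := hS
  exact ⟨notMem_of_reflTransGen_stepRel hw.2 hv₀, hw.2.trans hv.1⟩

lemma eq_of_mem_of_mem {S' : Set V} (hS : IsSourceComponent E F S)
    (hS' : IsSourceComponent E F S') {w : V} (hw : w ∈ S) (hw' : w ∈ S') : S = S' :=
  (hS.eq_reachSet hw).trans (hS'.eq_reachSet hw').symm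

end IsSourceComponent

/-- The mutual-reachability class of a vertex whose reach set is smallest is a source
component: an edge entering it from outside would give a strictly smaller reach set. -/
lemma exists_isSourceComponent [Finite V] (E : V → V → Prop) {F : Set V} (hF : ∃ v, v ∉ F) :
    ∃ S, IsSourceComponent E F S := by
  obtain ⟨v, hv, hmin⟩ := Set.exists_min_image {u | u ∉ F}
    (fun u => (reachSet E F u).ncard) (Set.toFinite _) hF
  refine ⟨_, ⟨v, hv, rfl⟩, fun a ha b hb hab => ?_⟩
  have hav : ReflTransGen (stepRel E F) a v := .head hab hb.2
  have hlt : reachSet E F a ⊂ reachSet E F v :=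
    ⟨fun w hw => ⟨hw.1, hw.2.trans hav⟩, fun h => ha ⟨(h ⟨hv, .refl⟩).2, hav⟩⟩
  exact (hmin a hab.1).not_gt (Set.ncard_lt_ncard hlt)

lemma two_mul_add_one_le_ncard_of_forall_le_ncard_sdiff {α : Type*} {S : Set α}
    (hS : S.Finite) {f : ℕ} {v : α} (hv : v ∈ S)
    (h : ∀ B ⊆ S \ {v}, B.ncard ≤ f → f + 1 ≤ (S \ B).ncard) : 2 * f + 1 ≤ S.ncard := by
  have hdel : (S \ {v}).ncard = S.ncard - 1 := Set.ncard_sdiff_singleton_of_mem hv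
  have hpos : 0 < S.ncard := (Set.ncard_pos hS).2 ⟨v, hv⟩
  obtain ⟨B, hB, hBcard⟩ := Set.exists_subset_card_eq (s := S \ {v}) (n := min f (S.ncard - 1))
    (by omega)
  have hB' : B ⊆ S := hB.trans Set.sdiff_subset
  have hrest : (S \ B).ncard = S.ncard - B.ncard :=
    Set.ncard_sdiff hB' (hS.subset hB')
  have := h B hB (by omega)
  omega

def TwoReach (E : V → V → Prop) (f ρ : ℕ) : Prop :=
  ∀ F1 F2 : Set V, F1.ncard ≤ f → F2.ncard ≤ f → ∀ u ∉ F1, ∀ v ∉ F2,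
    ρ ≤ (reachSet E F1 u ∩ reachSet E F2 v).ncard

namespace TwoReach

variable {f ρ : ℕ}

lemma le_ncard_inter (h : TwoReach E f ρ) {F' S' : Set V} (hF : F.ncard ≤ f)
    (hF' : F'.ncard ≤ f) (hS : IsSourceComponent E F S) (hS' : IsSourceComponent E F' S') :
    ρ ≤ (S ∩ S').ncard := by
  obtain ⟨v, hvF, hv⟩ := hS.exists_mem
  obtain ⟨v', hv'F, hv'⟩ := hS'.exists_mem
  rw [hS.eq_reachSet hv, hS'.eq_reachSet hv']
  exact h F F' hF hF' v hvF v' hv'F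

lemma isSourceComponent_unique (h : TwoReach E f (f + 1)) {S' : Set V} (hF : F.ncard ≤ f)
    (hS : IsSourceComponent E F S) (hS' : IsSourceComponent E F S') : S = S' := by
  have hinter := h.le_ncard_inter hF hF hS hS'
  obtain ⟨w, hw, hw'⟩ := Set.nonempty_of_ncard_ne_zero (s := S ∩ S') (by omega)
  exact hS.eq_of_mem_of_mem hS' hw hw'

lemma two_mul_add_one_le_ncard [Finite V] (h : TwoReach E f (f + 1)) (hF : F.ncard ≤ f)
    (hS : IsSourceComponent E F S) : 2 * f + 1 ≤ S.ncard := by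
  obtain ⟨v, hvF, hv⟩ := hS.exists_mem
  refine two_mul_add_one_le_ncard_of_forall_le_ncard_sdiff (Set.toFinite S) hv
    fun B hB hBf => (h F B hF hBf v hvF v fun hvB => (hB hvB).2 rfl).trans ?_
  refine Set.ncard_le_ncard (fun x hx => ⟨?_, hx.2.1⟩) (Set.toFinite _)
  exact hS.eq_reachSet hv ▸ hx.1

end TwoReach

end

theorem two_reach_fplus1_implies_conditionA_general {V : Type*} [Fintype V]
    (E : V → V → Prop) (f : ℕ) (hfn : f < Fintype.card V)
    (h2 : ∀ F1 F2 : Set V, F1.ncard ≤ f → F2.ncard ≤ f →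
      ∀ u ∉ F1, ∀ v ∉ F2,
        f + 1 ≤ (reachSet E F1 u ∩ reachSet E F2 v).ncard) :
    ConditionA E f := by
  have h2 : TwoReach E f (f + 1) := h2
  have hne : ∀ F : Set V, F.ncard ≤ f → ∃ v, v ∉ F := fun F hF =>
    (Set.ne_univ_iff_exists_notMem F).1 fun hFu => by
      rw [hFu, Set.ncard_univ, Nat.card_eq_fintype_card] at hF
      omega
  refine ⟨fun F hF => ?_, fun F F' hF hF' S S' hS hS' => h2.le_ncard_inter hF hF' hS hS'⟩
  obtain ⟨S, hS⟩ := exists_isSourceComponent E (hne F hF)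
  exact ⟨S, hS, h2.two_mul_add_one_le_ncard hF hS,
    fun S' hS' => h2.isSourceComponent_unique hF hS' hS⟩

theorem two_reach_fplus1_implies_conditionA {V : Type*} [Fintype V]
    (E : V → V → Prop) (f : ℕ) (hf : 0 < f) (hfn : f < Fintype.card V)
    (h2 : ∀ F1 F2 : Set V, F1.ncard ≤ f → F2.ncard ≤ f →
      ∀ u ∉ F1, ∀ v ∉ F2,
        f + 1 ≤ (reachSet E F1 u ∩ reachSet E F2 v).ncard) :
    ConditionA E f :=
  two_reach_fplus1_implies_conditionA_general E f hfn h2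
end

section
/- Suppose the directed graph G = (V,E) satisfies Condition S. Let F ⊆ V with |F| ≤ f, and let S_F be the unique source component of G_F. Then from each node in S_F to each node in V there exists a directed path in G whose internal nodes (nodes other than the first and the last node of the path) all lie in V−F. -/
/-- There is a directed path in `G` from `a` to `b` all of whose internal
nodes (nodes other than the first and the last node) avoid `F`. -/
def PathAvoidingInternal {V : Type*} (E : V → V → Prop) (F : Set V) (a b : V) : Prop :=
  a = b ∨ E a b ∨
    ∃ c d : V, c ∉ F ∧ d ∉ F ∧ E a c ∧
      Relation.ReflTransGen (stepRel E F) c d ∧ E d b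

/-!
Every vertex `x ∉ F` is reached in `G_F` from some source component: among the vertices that
reach `x`, take one whose own set of ancestors is minimal; an edge entering its strongly
connected component from outside would produce a strictly smaller ancestor set. As the source
component of `G_F` is unique, each of its vertices therefore reaches all of `V - F` inside `G_F`.
A vertex `w` with no in-neighbour outside `F` would be a singleton source component of
`G_{F - {w}}`, which Condition S forbids since `f ≥ 1`; so every `w ∈ F` is entered from `V - F`.
-/

open Relation

section

variable {V : Type*} {E : V → V → Prop} {F : Set V}

def sccOf (E : V → V → Prop) (F : Set V) (v : V) : Set V :=
  {w | ReflTransGen (stepRel E F) v w ∧ ReflTransGen (stepRel E F) w v}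

lemma exists_isSourceComponent_sccOf_reflTransGen [Finite V] {x : V} (hx : x ∉ F) :
    ∃ s ∉ F, IsSourceComponent E F (sccOf E F s) ∧ ReflTransGen (stepRel E F) s x := by
  obtain ⟨s, ⟨hsF, hsx⟩, hmin⟩ := (Set.toFinite (reachSet E F x)).exists_minimalFor
    (reachSet E F) _ ⟨x, hx, .refl⟩
  refine ⟨s, hsF, ⟨⟨s, hsF, rfl⟩, fun a ha b hb hab ↦ ha ⟨?_, .head hab hb.2⟩⟩, hsx⟩
  have has : ReflTransGen (stepRel E F) a s := .head hab hb.2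
  have hsub : reachSet E F a ⊆ reachSet E F s := fun z ⟨hzF, hza⟩ ↦ ⟨hzF, hza.trans has⟩
  exact (hmin ⟨hab.1, has.trans hsx⟩ hsub ⟨hsF, .refl⟩).2

lemma reflTransGen_of_mem_of_isSourceComponent_unique [Finite V] {S : Set V}
    (huniq : ∀ S', IsSourceComponent E F S' → S' = S) {u x : V} (hu : u ∈ S) (hx : x ∉ F) :
    ReflTransGen (stepRel E F) u x := by
  obtain ⟨s, -, hs, hsx⟩ := exists_isSourceComponent_sccOf_reflTransGen hx
  rw [← huniq _ hs] at hu
  exact hu.2.trans hsx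

lemma eq_of_reflTransGen_of_forall_stepRel_eq {w : V}
    (hw : ∀ a, stepRel E F a w → a = w) {z : V} (hz : ReflTransGen (stepRel E F) z w) :
    z = w := by
  induction hz using ReflTransGen.head_induction_on with
  | refl => rfl
  | head hac _ hcw => exact hw _ (hcw ▸ hac)

lemma isSourceComponent_singleton {w : V} (hwF : w ∉ F)
    (hw : ∀ a, stepRel E F a w → a = w) : IsSourceComponent E F {w} := by
  refine ⟨⟨w, hwF, ?_⟩, fun a ha b hb hab ↦ ha (hw a (hb ▸ hab))⟩
  ext z
  exact ⟨fun hz ↦ hz ▸ ⟨.refl, .refl⟩, fun hz ↦ eq_of_reflTransGen_of_forall_stepRel_eq hw hz.2⟩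

lemma ConditionS.exists_in_edge {f : ℕ} (hCS : ConditionS E f) (hf : 0 < f)
    (hF : F.ncard ≤ f) (w : V) : ∃ d ∉ F, E d w := by
  by_contra! hno
  obtain ⟨S, -, hcard, huniq⟩ :=
    hCS (F \ {w}) ((Set.ncard_sdiff_singleton_le F w).trans hF)
  have hsingle : IsSourceComponent E (F \ {w}) {w} := by
    refine isSourceComponent_singleton (fun h ↦ h.2 rfl) fun a ⟨ha, _, haw⟩ ↦ ?_
    by_contra hne
    exact hno a (fun haF ↦ ha ⟨haF, hne⟩) haw
  rw [← huniq _ hsingle, Set.ncard_singleton] at hcard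
  omega

namespace PathAvoidingInternal

lemma of_reflTransGen_of_edge {u d w : V} (hud : ReflTransGen (stepRel E F) u d)
    (hdF : d ∉ F) (hdw : E d w) : PathAvoidingInternal E F u w := by
  rcases hud.cases_head with rfl | ⟨c, huc, hcd⟩
  · exact .inr (.inl hdw)
  · exact .inr (.inr ⟨c, d, huc.2.1, hdF, huc.2.2, hcd, hdw⟩)

lemma of_reflTransGen {u w : V} (huw : ReflTransGen (stepRel E F) u w) :
    PathAvoidingInternal E F u w := by
  rcases huw.cases_tail with rfl | ⟨d, hud, hdw⟩
  · exact .inl rfl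
  · exact of_reflTransGen_of_edge hud hdw.1 hdw.2.2

end PathAvoidingInternal

end

theorem source_component_reaches_all_avoiding_internal_general {V : Type*} [Fintype V]
    (E : V → V → Prop) (f : ℕ) (hf : 0 < f)
    (hCS : ConditionS E f) (F : Set V) (hF : F.ncard ≤ f)
    (S : Set V) (hS : IsSourceComponent E F S) :
    ∀ u ∈ S, ∀ w : V, PathAvoidingInternal E F u w := by
  intro u hu w
  obtain ⟨S₀, -, -, huniq⟩ := hCS F hF
  have hreach : ∀ x ∉ F, ReflTransGen (stepRel E F) u x := fun x hx ↦
    reflTransGen_of_mem_of_isSourceComponent_unique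
      (fun S' hS' ↦ (huniq S' hS').trans (huniq S hS).symm) hu hx
  by_cases hwF : w ∈ F
  · obtain ⟨d, hdF, hdw⟩ := hCS.exists_in_edge hf hF w
    exact .of_reflTransGen_of_edge (hreach d hdF) hdF hdw
  · exact .of_reflTransGen (hreach w hwF)

theorem source_component_reaches_all_avoiding_internal {V : Type*} [Fintype V]
    (E : V → V → Prop) (f : ℕ) (hf : 0 < f) (hfn : f < Fintype.card V)
    (hCS : ConditionS E f) (F : Set V) (hF : F.ncard ≤ f)
    (S : Set V) (hS : IsSourceComponent E F S) :
    ∀ u ∈ S, ∀ w : V, PathAvoidingInternal E F u w :=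
  source_component_reaches_all_avoiding_internal_general E f hf hCS F hF S hS
end

section
/- Suppose the directed graph G = (V,E) satisfies Condition S. Suppose F ⊆ V with |F| = f, and the unique source component S_F of G_F contains exactly f+p nodes, where 0 < p ≤ f. Then for every integer k with p ≤ k ≤ f, every subset F1 ⊆ F of size k has at least k+1 outgoing neighbors in S_F, i.e., |{ y ∈ S_F : ∃ x ∈ F1, (x,y) ∈ E }| ≥ k+1. -/
/-!
If fewer than `k + 1` vertices of `S_F` had an in-neighbour in `F₁`, enlarge them to a set `M ⊆ S_F`
of exactly `k` vertices and remove `F' = (F \ F₁) ∪ M`, which still has at most `f` vertices.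
The remainder `S_F \ M` then receives no edge of `G_{F'}` from outside, so it contains a source
component of `G_{F'}`; but it has only `f + p - k ≤ f` vertices, against Condition S.
-/

section

variable {V : Type*}

def outNeighbors (E : V → V → Prop) (P Q : Set V) : Set V :=
  {y ∈ Q | ∃ x ∈ P, E x y}

namespace IsSourceComponent

variable {E : V → V → Prop} {F S : Set V}

theorem notMem_of_mem (hS : IsSourceComponent E F S) {w : V} (hw : w ∈ S) : w ∉ F := by
  obtain ⟨v, hvF, rfl⟩ := hS.1
  rcases hw.2.cases_head with rfl | ⟨c, hwc, -⟩
  · exact hvF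
  · exact hwc.1

theorem mem_sdiff_of_stepRel (hS : IsSourceComponent E F S) {F₁ M : Set V}
    (hM : outNeighbors E F₁ S ⊆ M) {a b : V}
    (hab : stepRel E (F \ F₁ ∪ M) a b) (hb : b ∈ S \ M) : a ∈ S \ M := by
  obtain ⟨haF', -, hE⟩ := hab
  refine ⟨by_contra fun haS => ?_, fun haM => haF' (Or.inr haM)⟩
  by_cases haF₁ : a ∈ F₁
  · exact hb.2 (hM ⟨hb.1, a, haF₁, hE⟩)
  · exact hS.2 a haS b hb.1 ⟨fun haF => haF' (Or.inl ⟨haF, haF₁⟩), hS.notMem_of_mem hb.1, hE⟩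

end IsSourceComponent

theorem ConditionS.succ_le_ncard {E : V → V → Prop} {f : ℕ} (hCS : ConditionS E f)
    {F S : Set V} (hF : F.ncard ≤ f) (hS : IsSourceComponent E F S) : f + 1 ≤ S.ncard := by
  obtain ⟨S', -, hcard, huniq⟩ := hCS F hF
  rwa [huniq S hS]

theorem Relation.ReflTransGen.mem_of_forall_mem {R : V → V → Prop} {C : Set V}
    (hC : ∀ a b, R a b → b ∈ C → a ∈ C) {a b : V} (hab : Relation.ReflTransGen R a b)
    (hb : b ∈ C) : a ∈ C := by
  induction hab using Relation.ReflTransGen.head_induction_on with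
  | refl => exact hb
  | head h _ ih => exact hC _ _ h ih

theorem exists_isSourceComponent_subset {E : V → V → Prop} {F C : Set V} (hCfin : C.Finite)
    (hCne : C.Nonempty) (hCF : ∀ w ∈ C, w ∉ F)
    (hC : ∀ a b, stepRel E F a b → b ∈ C → a ∈ C) :
    ∃ S ⊆ C, IsSourceComponent E F S := by
  let R := Relation.ReflTransGen (stepRel E F)
  -- A vertex of `C` with a minimal set of ancestors is reached back by each of its ancestors.
  obtain ⟨v, hvC, hvmin⟩ := hCfin.exists_minimalFor (fun w => {u | R u w}) C hCne
  have hback : ∀ w, R w v → R v w := fun w hwv =>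
    hvmin (hwv.mem_of_forall_mem hC hvC) (fun u hu => hu.trans hwv) Relation.ReflTransGen.refl
  refine ⟨{w | R v w ∧ R w v}, fun w hw => hw.2.mem_of_forall_mem hC hvC,
    ⟨v, hCF v hvC, rfl⟩, fun a ha b hb hab => ?_⟩
  have hav : R a v := Relation.ReflTransGen.head hab hb.2
  exact ha ⟨hback a hav, hav⟩

end

theorem subset_of_F_has_many_outgoing_neighbors_general {V : Type*} [Fintype V]
    (E : V → V → Prop) (f p : ℕ)
    (hCS : ConditionS E f) (F : Set V) (hF : F.ncard = f)
    (S : Set V) (hS : IsSourceComponent E F S) (hScard : S.ncard = f + p)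
    (hp0 : 0 < p) :
    ∀ k : ℕ, p ≤ k → k ≤ f → ∀ F1 ⊆ F, F1.ncard = k →
      k + 1 ≤ {y ∈ S | ∃ x ∈ F1, E x y}.ncard := by
  intro k hpk hkf F1 hF1 hF1card
  by_contra! hlt
  obtain ⟨M, hNM, hMS, hMcard⟩ :=
    Set.exists_subsuperset_card_eq (fun _ hy => hy.1 : outNeighbors E F1 S ⊆ S)
      (Nat.le_of_lt_succ hlt) (by omega : k ≤ S.ncard)
  have hF' : (F \ F1 ∪ M).ncard ≤ f :=
    calc (F \ F1 ∪ M).ncard ≤ (F \ F1).ncard + M.ncard := Set.ncard_union_le _ _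
      _ = f - k + k := by rw [Set.ncard_sdiff hF1, hF, hF1card, hMcard]
      _ ≤ f := by omega
  have hC : (S \ M).ncard = f + p - k := by rw [Set.ncard_sdiff hMS, hScard, hMcard]
  obtain ⟨S₀, hS₀C, hS₀⟩ := exists_isSourceComponent_subset (Set.toFinite (S \ M))
    (Set.nonempty_of_ncard_ne_zero (by omega))
    (fun w hw hwF' => hwF'.elim (fun h => hS.notMem_of_mem hw.1 h.1) hw.2)
    (fun _ _ => hS.mem_sdiff_of_stepRel hNM)
  have := hCS.succ_le_ncard hF' hS₀
  have := Set.ncard_le_ncard hS₀C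
  omega

theorem subset_of_F_has_many_outgoing_neighbors {V : Type*} [Fintype V]
    (E : V → V → Prop) (f p : ℕ) (hf : 0 < f) (hfn : f < Fintype.card V)
    (hCS : ConditionS E f) (F : Set V) (hF : F.ncard = f)
    (S : Set V) (hS : IsSourceComponent E F S) (hScard : S.ncard = f + p)
    (hp0 : 0 < p) (hpf : p ≤ f) :
    ∀ k : ℕ, p ≤ k → k ≤ f → ∀ F1 ⊆ F, F1.ncard = k →
      k + 1 ≤ {y ∈ S | ∃ x ∈ F1, E x y}.ncard :=
  subset_of_F_has_many_outgoing_neighbors_general E f p hCS F hF S hS hScard hp0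
end
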